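/- Let m ≥ 1 be an integer and suppose in addition that m divides a_n and m divides b_n for every n ≥ 1, and let (e_i)_{i≥0} satisfy the Read relations. Let D_m : ℓ¹ → ℓ¹ be the continuous linear operator with D_m f_i = f_i if m divides i and D_m f_i = 0 otherwise, and let T : ℓ¹ → ℓ¹ be a continuous linear operator with T e_i = e_{i+1} for all i ≥ 0. Then T^m ∘ D_m = D_m ∘ T^m on all of ℓ¹. -/

import Mathlib

/-- The real Banach space ℓ¹ of absolutely summable real sequences. -/
abbrev L1 : Type := lp (fun _ : ℕ => ℝ) 1

/-- The standard unit vectors of ℓ¹. -/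
noncomputable def f (i : ℕ) : L1 := lp.single 1 i 1

/-- The dense subspace `F` of ℓ¹ spanned by the standard unit vectors. -/
noncomputable def F : Submodule ℝ L1 := Submodule.span ℝ (Set.range f)

/-- `v n = n * (a n + b n)`; note `v 0 = 0`. -/
def v (a b : ℕ → ℕ) (n : ℕ) : ℕ := n * (a n + b n)

/-- The sequence `e` satisfies C. J. Read's relations (0), (A), (B), (C), (D). -/
noncomputable def ReadRelations (a b : ℕ → ℕ) (e : ℕ → L1) : Prop :=
  -- (0)
  e 0 = f 0 ∧
  -- (A)
  (∀ r n i : ℕ, 0 < r → r ≤ n → r * a n ≤ i → i ≤ r * a n + v a b (n - r) →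
    f i = (a (n - r) : ℝ) • (e i - e (i - r * a n))) ∧
  -- (B), first case
  (∀ r n i : ℕ, 1 ≤ r → r < n → r * a n + v a b (n - r) < i → i < (r + 1) * a n →
    f i = ((2 : ℝ) ^ ((((r : ℝ) + 1 / 2) * (a n : ℝ) - (i : ℝ)) / Real.sqrt (a n))) • e i) ∧
  -- (B), second case
  (∀ n i : ℕ, 1 ≤ n → v a b (n - 1) < i → i < a n →
    f i = ((2 : ℝ) ^ (((a n : ℝ) / 2 - (i : ℝ)) / Real.sqrt (a n))) • e i) ∧
  -- (C)
  (∀ r n i : ℕ, 1 ≤ r → r ≤ n → r * (a n + b n) ≤ i → i ≤ n * a n + r * b n →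
    f i = e i - (b n : ℝ) • e (i - b n)) ∧
  -- (D)
  (∀ r n i : ℕ, r < n → n * a n + r * b n < i → i < (r + 1) * (a n + b n) →
    f i = ((2 : ℝ) ^ ((((r : ℝ) + 1 / 2) * (b n : ℝ) - (i : ℝ)) / Real.sqrt (b n))) • e i)


/-!
Read's relations are unitriangular with respect to residues mod `m`: each `f i` is a multiple
of `e i` minus a combination of earlier `e j` with `j ≡ i [MOD m]`, because the only shifts
occurring, `r * a n` and `b n`, are multiples of `m`. Since `f i ≠ 0` the multiple is nonzero,
so inductively `e i` lies in the span of the `f j` with `j ≡ i [MOD m]`, on which `Dₘ` is the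
identity or zero according as `m ∣ i`. The same relations put every `f i` in the span of the
`e j`, which is therefore dense. On `e i` both `Tᵐ ∘ Dₘ` and `Dₘ ∘ Tᵐ` give `e (i + m)` or `0`.
-/

open Set Submodule

section Triangular

variable (R : Type*) {V : Type*} [Field R] [AddCommGroup V] [Module R V]

def TriangularModAt (m : ℕ) (u e : ℕ → V) (i : ℕ) : Prop :=
  ∃ c : R, ∃ x ∈ span R (e '' {j | j < i ∧ j ≡ i [MOD m]}), u i = c • (e i - x)

variable {R} {m : ℕ} {u e : ℕ → V}

theorem triangularModAt_of_eq_smul {i : ℕ} {c : R} (h : u i = c • e i) :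
    TriangularModAt R m u e i :=
  ⟨c, 0, zero_mem _, by rw [h, sub_zero]⟩

theorem triangularModAt_of_eq_smul_sub_smul {i d : ℕ} {c c' : R} (hd : 0 < d) (hdi : d ≤ i)
    (hmd : m ∣ d) (h : u i = c • (e i - c' • e (i - d))) : TriangularModAt R m u e i := by
  have hmod : i - d ≡ i [MOD m] :=
    (Nat.modEq_iff_dvd' (Nat.sub_le i d)).2 (by rwa [Nat.sub_sub_self hdi])
  exact ⟨c, c' • e (i - d), smul_mem _ _ (subset_span ⟨i - d, ⟨by omega, hmod⟩, rfl⟩), h⟩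

theorem TriangularModAt.mem_span_range {i : ℕ} (h : TriangularModAt R m u e i) :
    u i ∈ span R (range e) := by
  obtain ⟨c, x, hx, hu⟩ := h
  rw [hu]
  exact smul_mem _ _ (sub_mem (subset_span ⟨i, rfl⟩) (span_mono (image_subset_range _ _) hx))

theorem mem_span_image_modEq_of_triangularModAt (hu : ∀ i, u i ≠ 0)
    (h : ∀ i, TriangularModAt R m u e i) (i : ℕ) : e i ∈ span R (u '' {j | j ≡ i [MOD m]}) := by
  induction i using Nat.strong_induction_on with
  | _ i ih =>
  obtain ⟨c, x, hx, hui⟩ := h i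
  have hc : c ≠ 0 := by
    rintro rfl
    exact hu i (by rw [hui, zero_smul])
  have hx' : x ∈ span R (u '' {j | j ≡ i [MOD m]}) := by
    refine span_le.2 ?_ hx
    rintro _ ⟨j, ⟨hji, hj⟩, rfl⟩
    exact span_mono (image_mono fun k hk => Nat.ModEq.trans hk hj) (ih j hji)
  have hei : e i = c⁻¹ • u i + x := by
    rw [hui, smul_smul, inv_mul_cancel₀ hc, one_smul, sub_add_cancel]
  rw [hei]
  exact add_mem (smul_mem _ _ (subset_span ⟨i, Nat.ModEq.refl i, rfl⟩)) hx'

end Triangular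

theorem apply_eq_ite_of_mem_span_image_modEq {R V : Type*} [Semiring R] [AddCommMonoid V]
    [Module R V] {m : ℕ} {u : ℕ → V} (D : V →ₗ[R] V)
    (hD : ∀ j, D (u j) = if m ∣ j then u j else 0) {i : ℕ} {x : V}
    (hx : x ∈ span R (u '' {j | j ≡ i [MOD m]})) : D x = if m ∣ i then x else 0 := by
  split_ifs with hi
  · refine (span_le (p := LinearMap.eqLocus D LinearMap.id)).2 ?_ hx
    rintro _ ⟨j, hj, rfl⟩
    simp [hD, (Nat.ModEq.dvd_iff hj dvd_rfl).2 hi]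
  · refine (span_le (p := LinearMap.ker D)).2 ?_ hx
    rintro _ ⟨j, hj, rfl⟩
    simp [hD, mt (Nat.ModEq.dvd_iff hj dvd_rfl).1 hi]

theorem f_ne_zero (i : ℕ) : f i ≠ 0 := by
  intro h
  simpa [f] using congrArg (fun x : L1 => x i) h

theorem dense_F : Dense (F : Set L1) := by
  intro x
  refine mem_closure_of_tendsto (lp.hasSum_single ENNReal.one_ne_top x)
    (Filter.Eventually.of_forall fun s => sum_mem fun i _ => ?_)
  have : lp.single 1 i (x i) = x i • f i := by
    rw [f, ← lp.single_smul, smul_eq_mul, mul_one]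
  rw [this]
  exact smul_mem _ _ (subset_span ⟨i, rfl⟩)

section ReadRelations

variable {a b : ℕ → ℕ} {e : ℕ → L1} {m : ℕ}

theorem exists_v_pred_lt_le (hga : ∀ n, 1 ≤ n → v a b (n - 1) < a n) {i : ℕ} (hi : 0 < i) :
    ∃ n, 1 ≤ n ∧ v a b (n - 1) < i ∧ i ≤ v a b n := by
  have hex : ∃ n, i ≤ v a b n := ⟨i, Nat.le_mul_of_pos_right i (by have := hga i hi; omega)⟩
  have hn : Nat.find hex ≠ 0 := fun h0 => by
    have := Nat.find_spec hex
    rw [h0, v, zero_mul] at this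
    omega
  exact ⟨Nat.find hex, by omega, not_le.1 (Nat.find_min hex (by omega)), Nat.find_spec hex⟩

theorem triangularModAt_of_le_mul_a (he : ReadRelations a b e) {n i : ℕ} (hma : m ∣ a n)
    (ha : 0 < a n) (h1 : a n ≤ i) (h2 : i ≤ n * a n) : TriangularModAt ℝ m f e i := by
  obtain ⟨-, heA, heB, -⟩ := he
  obtain ⟨r, hr, hr'⟩ : ∃ r, r * a n ≤ i ∧ i < (r + 1) * a n :=
    ⟨i / a n, Nat.div_mul_le_self i (a n), (Nat.lt_mul_div_succ i ha).trans_eq (Nat.mul_comm _ _)⟩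
  have hr1 : 1 ≤ r := Nat.pos_of_ne_zero fun h0 => by
    simp only [h0, zero_add, one_mul] at hr'
    omega
  have hrn : r ≤ n := Nat.le_of_mul_le_mul_right (hr.trans h2) ha
  by_cases hA : i ≤ r * a n + v a b (n - r)
  · exact triangularModAt_of_eq_smul_sub_smul (c := (a (n - r) : ℝ)) (c' := 1)
      (Nat.mul_pos hr1 ha) hr (dvd_mul_of_dvd_right hma r)
      (by rw [one_smul]; exact heA r n i hr1 hrn hr hA)
  · have hrn' : r < n := by
      refine lt_of_le_of_ne hrn ?_
      rintro rfl
      simp only [Nat.sub_self, v, zero_mul, add_zero] at hA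
      omega
    exact triangularModAt_of_eq_smul (heB r n i hr1 hrn' (not_le.1 hA) hr')

theorem triangularModAt_of_mul_a_lt (he : ReadRelations a b e) {n i : ℕ} (hmb : m ∣ b n)
    (hb : 0 < b n) (h1 : n * a n < i) (h2 : i ≤ v a b n) : TriangularModAt ℝ m f e i := by
  obtain ⟨-, -, -, -, heC, heD⟩ := he
  obtain ⟨r, hr, hr'⟩ : ∃ r, r * b n ≤ i - n * a n - 1 ∧ i - n * a n - 1 < (r + 1) * b n :=
    ⟨_, Nat.div_mul_le_self _ (b n), (Nat.lt_mul_div_succ _ hb).trans_eq (Nat.mul_comm _ _)⟩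
  rw [add_one_mul] at hr'
  have hv : v a b n = n * a n + n * b n := mul_add _ _ _
  have hrn : r < n := Nat.lt_of_mul_lt_mul_right (a := b n) (by omega)
  by_cases hD : i < (r + 1) * (a n + b n)
  · exact triangularModAt_of_eq_smul (heD r n i hrn (by omega) hD)
  · have hC := heC (r + 1) n i (by omega) hrn (not_lt.1 hD) (by rw [add_one_mul]; omega)
    have hbi : b n ≤ i := le_trans (by rw [add_one_mul, mul_add]; omega) (not_lt.1 hD)
    exact triangularModAt_of_eq_smul_sub_smul (c := 1) hb hbi hmb (by rw [one_smul]; exact hC)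

theorem triangularModAt_of_readRelations (hga : ∀ n, 1 ≤ n → v a b (n - 1) < a n)
    (hgb : ∀ n, 1 ≤ n → n * a n < b n) (hdvd : ∀ n, 1 ≤ n → m ∣ a n ∧ m ∣ b n)
    (he : ReadRelations a b e) (i : ℕ) : TriangularModAt ℝ m f e i := by
  rcases Nat.eq_zero_or_pos i with rfl | hi
  · exact triangularModAt_of_eq_smul (c := 1) (by rw [one_smul, he.1])
  obtain ⟨n, hn, hlo, hhi⟩ := exists_v_pred_lt_le hga hi
  -- `(v (n - 1), v n]` is covered by (B) below `a n`, (A)/(B) up to `n * a n`, (C)/(D) above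
  rcases lt_or_ge i (a n) with h1 | h1
  · exact triangularModAt_of_eq_smul (he.2.2.2.1 n i hn hlo h1)
  rcases le_or_gt i (n * a n) with h2 | h2
  · exact triangularModAt_of_le_mul_a he (hdvd n hn).1 ((Nat.zero_le _).trans_lt (hga n hn))
      h1 h2
  · exact triangularModAt_of_mul_a_lt he (hdvd n hn).2 (by have := hgb n hn; omega) h2 hhi

end ReadRelations

theorem read_operator_pow_commutes_with_projection_general (m : ℕ)
    (a b : ℕ → ℕ)
    (hga : ∀ n, 1 ≤ n → v a b (n - 1) < a n)
    (hgb : ∀ n, 1 ≤ n → n * a n < b n)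
    (hdvd : ∀ n, 1 ≤ n → m ∣ a n ∧ m ∣ b n)
    (e : ℕ → L1) (he : ReadRelations a b e)
    (Dm : L1 →L[ℝ] L1)
    (hDm : ∀ i : ℕ, Dm (f i) = if m ∣ i then f i else 0)
    (T : L1 →L[ℝ] L1)
    (hT : ∀ i : ℕ, T (e i) = e (i + 1)) :
    (T ^ m).comp Dm = Dm.comp (T ^ m) := by
  have htri := triangularModAt_of_readRelations hga hgb hdvd he
  have hDe (i : ℕ) : Dm (e i) = if m ∣ i then e i else 0 :=
    apply_eq_ite_of_mem_span_image_modEq Dm.toLinearMap hDm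
      (mem_span_image_modEq_of_triangularModAt f_ne_zero htri i)
  have hTe (k i : ℕ) : (T ^ k) (e i) = e (i + k) := by
    rw [FunLike.coe_pow_eq_iterate, ← (Function.Semiconj.iterate_right (fun j => (hT j).symm) k) i,
      Nat.succ_iterate]
  have hdense : Dense (span ℝ (range e) : Set L1) :=
    dense_F.mono (span_le.2 (range_subset_iff.2 fun i => (htri i).mem_span_range))
  refine ContinuousLinearMap.ext_on hdense ?_
  rintro _ ⟨i, rfl⟩
  simp only [ContinuousLinearMap.comp_apply, hDe, hTe, Nat.dvd_add_self_right]
  split_ifs <;> simp [hTe]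

/-- If `m` divides all `aₙ` and `bₙ`, `(eᵢ)` satisfies the Read relations, `Dₘ` is the
continuous operator with `Dₘ fᵢ = fᵢ` when `m ∣ i` and `Dₘ fᵢ = 0` otherwise, and `T`
is a continuous operator with `T eᵢ = e_{i+1}`, then `Tᵐ ∘ Dₘ = Dₘ ∘ Tᵐ`. -/
theorem read_operator_pow_commutes_with_projection (m : ℕ) (hm : 1 ≤ m)
    (a b : ℕ → ℕ)
    (ha0 : a 0 = 1)
    (hpos : 0 < a 1)
    (hab : ∀ n, 1 ≤ n → a n < b n)
    (hba : ∀ n, 1 ≤ n → b n < a (n + 1))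
    (hga : ∀ n, 1 ≤ n → v a b (n - 1) < a n)
    (hgb : ∀ n, 1 ≤ n → n * a n < b n)
    (hdvd : ∀ n, 1 ≤ n → m ∣ a n ∧ m ∣ b n)
    (e : ℕ → L1) (heF : ∀ i, e i ∈ F) (he : ReadRelations a b e)
    (Dm : L1 →L[ℝ] L1)
    (hDm : ∀ i : ℕ, Dm (f i) = if m ∣ i then f i else 0)
    (T : L1 →L[ℝ] L1)
    (hT : ∀ i : ℕ, T (e i) = e (i + 1)) :
    (T ^ m).comp Dm = Dm.comp (T ^ m) :=
  read_operator_pow_commutes_with_projection_general m a b hga hgb hdvd e he Dm hDm T hT
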